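/- arXiv:2207.05150 — 6 statements merged into one kernel-verified Lean document; each statement's English description precedes it below -/
import Mathlib

section
/- Let G be a finite directed graph on vertex set V where each vertex v has at most one outgoing edge, defined as follows: fix a metric d on V and a strict total order ≺ on V; the out-neighbor of v (if it exists) is the vertex u ≠ v minimizing d(v,u), with ties broken by taking the ≺-least such u. Then every directed cycle in G has length at most 2. -/
/-!
Along a directed cycle `v₀ → v₁ → ⋯ → v₀` the edge lengths `d (vᵢ) (vᵢ₊₁)` can only decrease,
because `vᵢ` is a candidate for the nearest neighbour of `vᵢ₊₁`. Going once around the cycle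
they are therefore all equal, so `vᵢ` ties with `vᵢ₊₂ = out vᵢ₊₁` and tie-breaking gives
`vᵢ₊₂ ≼ vᵢ`. Going around again forces `vᵢ₊₂ = vᵢ`, which is impossible on a cycle with at
least three distinct vertices.
-/

theorem nsmul_le_of_forall_add_le {G α : Type*} [AddMonoid G] [Preorder α] {f : G → α} {s : G}
    (h : ∀ i, f (i + s) ≤ f i) (i : G) (m : ℕ) : f (i + m • s) ≤ f i := by
  induction m with
  | zero => simp
  | succ m ih =>
    rw [succ_nsmul, ← add_assoc]
    exact (h _).trans ih

theorem eq_of_forall_add_le {G α : Type*} [AddGroup G] [Finite G] [PartialOrder α]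
    {f : G → α} {s : G} (h : ∀ i, f (i + s) ≤ f i) (i : G) : f (i + s) = f i := by
  obtain ⟨N, hN⟩ := Nat.exists_eq_add_one_of_ne_zero (Nat.card_pos (α := G)).ne'
  have hround : i + s + N • s = i := by
    rw [add_assoc, ← succ_nsmul', ← hN, card_nsmul_eq_zero', add_zero]
  have hback := nsmul_le_of_forall_add_le h (i + s) N
  rw [hround] at hback
  exact (h i).antisymm hback

section NearestNeighbour

variable {V : Type*} {d : V → V → ℝ} {out : V → V}

theorem dist_out_out_le (hsym : ∀ u v, d u v = d v u) (hne : ∀ v, out v ≠ v)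
    (hmin : ∀ v u, u ≠ v → d v (out v) ≤ d v u) (v : V) :
    d (out v) (out (out v)) ≤ d v (out v) :=
  (hmin (out v) v (hne v).symm).trans_eq (hsym _ _)

theorem out_out_le_of_dist_eq [LinearOrder V] (hsym : ∀ u v, d u v = d v u)
    (hne : ∀ v, out v ≠ v)
    (htie : ∀ v u, u ≠ v → d v u = d v (out v) → out v ≤ u) (v : V)
    (heq : d (out v) (out (out v)) = d v (out v)) : out (out v) ≤ v :=
  htie (out v) v (hne v).symm (by rw [hsym, heq])

end NearestNeighbour

theorem stmt_2_general {V : Type*} [LinearOrder V]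
    (d : V → V → ℝ) (hsym : ∀ u v, d u v = d v u)
    (out : V → V)
    (hne : ∀ v, out v ≠ v)
    (hmin : ∀ v u, u ≠ v → d v (out v) ≤ d v u)
    (htie : ∀ v u, u ≠ v → d v u = d v (out v) → out v ≤ u) :
    ∀ (k : ℕ) (v : Fin (k + 3) → V), Function.Injective v →
      ¬ (∀ i : Fin (k + 3), out (v i) = v (i + 1)) := by
  intro k v hinj hcyc
  have hdist_const : ∀ i, d (v (i + 1)) (v (i + 1 + 1)) = d (v i) (v (i + 1)) :=
    eq_of_forall_add_le (f := fun i => d (v i) (v (i + 1))) fun i => by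
      simpa only [hcyc] using dist_out_out_le hsym hne hmin (v i)
  have hskip : ∀ i, v (i + 2) ≤ v i := fun i => by
    have := out_out_le_of_dist_eq hsym hne htie (v i) (by simpa only [hcyc] using hdist_const i)
    rwa [hcyc, hcyc, add_assoc, show (1 + 1 : Fin (k + 3)) = 2 from rfl] at this
  have h20 : (2 : Fin (k + 3)) = 0 := by
    simpa using hinj (eq_of_forall_add_le hskip 0)
  exact absurd h20 (by simp [Fin.ext_iff, Nat.mod_eq_of_lt])

/-- If `out v` is the nearest vertex to `v` (other than `v`) w.r.t. a symmetric
distance `d`, with ties broken by taking the least vertex in a linear order,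
then every directed cycle of the functional graph `out` has length at most 2,
i.e. there is no directed cycle of length `k + 3` for any `k`. -/
theorem stmt_2 {V : Type*} [Fintype V] [LinearOrder V]
    (d : V → V → ℝ) (hsym : ∀ u v, d u v = d v u)
    (out : V → V)
    (hne : ∀ v, out v ≠ v)
    (hmin : ∀ v u, u ≠ v → d v (out v) ≤ d v u)
    (htie : ∀ v u, u ≠ v → d v u = d v (out v) → out v ≤ u) :
    ∀ (k : ℕ) (v : Fin (k + 3) → V), Function.Injective v →
      ¬ (∀ i : Fin (k + 3), out (v i) = v (i + 1)) :=
  stmt_2_general d hsym out hne hmin htie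
end

section
/- Consider the linear program LP_JMS(q, T) over variables α ∈ ℝ^q, d ∈ ℝ^q, r ∈ ℝ^{q×q} (entries r_{j,i} for j ≤ i), λ ∈ ℝ, all nonnegative, with constraints: ∑_i d_i = 1; α_i ≤ α_{i+1} for i < q; r_{j,i+1} ≤ r_{j,i} for j ≤ i < q; α_i ≤ r_{j,i} + d_i + d_j for j < i; r_{j,j} ≤ α_j; ∑_{j<i} max(r_{j,i} − d_j, 0) + ∑_{j≥i} max(α_i − d_j, 0) ≤ λ for each i; λ ≤ T; objective: maximize ∑_i α_i − λ. Then for any positive integers q and c, the optimal value satisfies opt(q, T) ≤ opt(cq, T). Specifically: any feasible solution of LP_JMS(q,T) can be lifted to a feasible solution of LP_JMS(cq,T) with the same objective value via α'_i = α_{⌈i/c⌉}/c, d'_i = d_{⌈i/c⌉}/c, r'_{j,i} = r_{⌈j/c⌉,⌈i/c⌉}/c if ⌈j/c⌉ < ⌈i/c⌉ and α_{⌈j/c⌉}/c if ⌈j/c⌉ = ⌈i/c⌉, λ' = λ. -/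
/-!
Replace every index `k` of a feasible solution by a block of `c` consecutive indices, each carrying
a `1/c` share of `α_k` and `d_k`.  Every constraint of `LP_JMS(cq, T)` at indices `j, i` is `1/c`
times a constraint of `LP_JMS(q, T)` at the blocks `⌈j/c⌉, ⌈i/c⌉`, except inside a single block
`J`, where `r'` is set to `α'`, so those constraints hold trivially or reduce to
`r_{J,J+1} ≤ r_{J,J} ≤ α_J`.  Summing over a block multiplies by
`c`, which cancels the `1/c`; hence the `d`-normalization, the `λ`-constraints and the objective
survive unchanged.
-/

/-- Feasibility for the factor-revealing LP `LP_JMS(q, T)`, with variables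
indexed by `1, …, q`.  `a` plays the role of `α`, `lam` of `λ`. -/
def jmsFeasible (q : ℕ) (T : ℝ) (a d : ℕ → ℝ) (r : ℕ → ℕ → ℝ) (lam : ℝ) : Prop :=
  (∀ i, 0 ≤ a i) ∧ (∀ i, 0 ≤ d i) ∧ (∀ j i, 0 ≤ r j i) ∧ 0 ≤ lam ∧
  (∑ i ∈ Finset.Icc 1 q, d i) = 1 ∧
  (∀ i, 1 ≤ i → i < q → a i ≤ a (i + 1)) ∧
  (∀ j i, 1 ≤ j → j ≤ i → i < q → r j (i + 1) ≤ r j i) ∧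
  (∀ j i, 1 ≤ j → j < i → i ≤ q → a i ≤ r j i + d i + d j) ∧
  (∀ j, 1 ≤ j → j ≤ q → r j j ≤ a j) ∧
  (∀ i, 1 ≤ i → i ≤ q →
    (∑ j ∈ Finset.Ico 1 i, max (r j i - d j) 0) +
      (∑ j ∈ Finset.Icc i q, max (a i - d j) 0) ≤ lam) ∧
  lam ≤ T

open Finset

namespace Nat
variable {c : ℕ}

lemma one_le_ceilDiv_iff (hc : 0 < c) {i : ℕ} : 1 ≤ i ⌈/⌉ c ↔ 1 ≤ i := by
  simp only [Nat.one_le_iff_ne_zero, ← Nat.pos_iff_ne_zero, ← not_le,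
    ceilDiv_le_iff_le_mul hc, mul_zero]

lemma ceilDiv_le_ceilDiv (hc : 0 < c) {i j : ℕ} (hij : i ≤ j) : i ⌈/⌉ c ≤ j ⌈/⌉ c :=
  (gc_mul_ceilDiv hc).monotone_l hij

lemma add_one_ceilDiv_le (hc : 0 < c) (i : ℕ) : (i + 1) ⌈/⌉ c ≤ i ⌈/⌉ c + 1 := by
  have hi : i ≤ c * (i ⌈/⌉ c) := (ceilDiv_le_iff_le_mul hc).1 le_rfl
  rw [ceilDiv_le_iff_le_mul hc, mul_add_one]
  omega

lemma ceilDiv_eq_add_one_iff (hc : 0 < c) {i k : ℕ} :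
    i ⌈/⌉ c = k + 1 ↔ c * k < i ∧ i ≤ c * (k + 1) := by
  rw [← ceilDiv_le_iff_le_mul hc, ← not_le, ← ceilDiv_le_iff_le_mul hc]
  omega

lemma ceilDiv_mem_Icc (hc : 0 < c) {i q : ℕ} (hi : 1 ≤ i) (hiq : i ≤ c * q) :
    i ⌈/⌉ c ∈ Set.Icc 1 q :=
  ⟨(one_le_ceilDiv_iff hc).2 hi, (ceilDiv_le_iff_le_mul hc).2 hiq⟩

end Nat

lemma sum_Icc_mul_ceilDiv {M : Type*} [AddCommMonoid M] {c : ℕ} (hc : 0 < c) (f : ℕ → M)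
    (q : ℕ) : ∑ i ∈ Icc 1 (c * q), f (i ⌈/⌉ c) = c • ∑ k ∈ Icc 1 q, f k := by
  induction q with
  | zero => simp
  | succ q ih =>
    have hblock (i : ℕ) (hi : i ∈ Ioc (c * q) (c * (q + 1))) : f (i ⌈/⌉ c) = f (q + 1) :=
      congrArg f ((Nat.ceilDiv_eq_add_one_iff hc).2 (mem_Ioc.1 hi))
    have hIcc (n : ℕ) : Icc 1 n = Ioc 0 n := Icc_add_one_left_eq_Ioc 0 n
    rw [hIcc, ← sum_Ioc_consecutive _ (Nat.zero_le (c * q)) (Nat.mul_le_mul_left c q.le_succ),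
      sum_congr rfl hblock, sum_const, Nat.card_Ioc, ← hIcc, ih, sum_Icc_succ_top (by omega),
      smul_add, ← Nat.mul_sub, Nat.add_sub_cancel_left, mul_one]

lemma sum_Ico_add_sum_Icc_eq_sum_ite {M : Type*} [AddCommMonoid M] (f g : ℕ → M) {i m : ℕ}
    (hi : 1 ≤ i) (him : i ≤ m + 1) :
    ∑ j ∈ Ico 1 i, f j + ∑ j ∈ Icc i m, g j = ∑ j ∈ Icc 1 m, if j < i then f j else g j := by
  rw [sum_ite]
  congr 2 <;> ext j <;> simp only [mem_filter, mem_Ico, mem_Icc] <;> omega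

/-- The `j`-th summand of the `λ`-constraint of `LP_JMS` for index `i`. -/
noncomputable def jmsLoad (a d : ℕ → ℝ) (r : ℕ → ℕ → ℝ) (i j : ℕ) : ℝ :=
  if j < i then max (r j i - d j) 0 else max (a i - d j) 0

lemma jmsLoad_sum {a d : ℕ → ℝ} {r : ℕ → ℕ → ℝ} {q i : ℕ} (hi : 1 ≤ i) (hiq : i ≤ q) :
    ∑ j ∈ Icc 1 q, jmsLoad a d r i j =
      ∑ j ∈ Ico 1 i, max (r j i - d j) 0 + ∑ j ∈ Icc i q, max (a i - d j) 0 :=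
  (sum_Ico_add_sum_Icc_eq_sum_ite _ _ hi (by omega)).symm

section Lift

variable (c : ℕ)

-- `i ⌈/⌉ c` unfolds to the statement's `(i + c - 1) / c` (`Nat.ceilDiv_eq_add_pred_div` is `rfl`).
noncomputable def blockLift (f : ℕ → ℝ) (i : ℕ) : ℝ := f (i ⌈/⌉ c) / c

noncomputable def blockLiftR (a : ℕ → ℝ) (r : ℕ → ℕ → ℝ) (j i : ℕ) : ℝ :=
  if j ⌈/⌉ c < i ⌈/⌉ c then r (j ⌈/⌉ c) (i ⌈/⌉ c) / c else blockLift c a j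

variable {c}

lemma sum_blockLift (hc : 0 < c) (f : ℕ → ℝ) (q : ℕ) :
    ∑ i ∈ Icc 1 (c * q), blockLift c f i = ∑ k ∈ Icc 1 q, f k := by
  have hc' : (c : ℝ) ≠ 0 := by positivity
  unfold blockLift
  rw [sum_Icc_mul_ceilDiv hc (f · / c), nsmul_eq_mul, ← sum_div, mul_div_cancel₀ _ hc']

lemma jmsLoad_blockLift (hc : 0 < c) (a d : ℕ → ℝ) (r : ℕ → ℕ → ℝ) (i j : ℕ) :
    jmsLoad (blockLift c a) (blockLift c d) (blockLiftR c a r) i j =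
      jmsLoad a d r (i ⌈/⌉ c) (j ⌈/⌉ c) / c := by
  have hc' : (0 : ℝ) ≤ c := c.cast_nonneg
  have hmax (x y : ℝ) : max (x / c - y / c) 0 = max (x - y) 0 / c := by
    rw [div_sub_div_same, ← max_div_div_right hc', zero_div]
  unfold jmsLoad blockLiftR blockLift
  by_cases hji : j < i
  · by_cases hJI : j ⌈/⌉ c < i ⌈/⌉ c
    · rw [if_pos hji, if_pos hJI, if_pos hJI, hmax]
    · have hJ : j ⌈/⌉ c = i ⌈/⌉ c := le_antisymm (Nat.ceilDiv_le_ceilDiv hc hji.le) (not_lt.1 hJI)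
      rw [if_pos hji, if_neg hJI, if_neg hJI, hmax, hJ]
  · have hJI : ¬ j ⌈/⌉ c < i ⌈/⌉ c := not_lt.2 (Nat.ceilDiv_le_ceilDiv hc (not_lt.1 hji))
    rw [if_neg hji, if_neg hJI, hmax]

end Lift

namespace jmsFeasible

variable {q c : ℕ} {T : ℝ} {a d : ℕ → ℝ} {r : ℕ → ℕ → ℝ} {lam : ℝ}

lemma monotoneOn_a (h : jmsFeasible q T a d r lam) : MonotoneOn a (Set.Icc 1 q) := by
  obtain ⟨-, -, -, -, -, ha, -⟩ := h
  exact monotoneOn_of_le_add_one Set.ordConnected_Icc fun i _ hi hi' =>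
    ha i hi.1 (Nat.lt_of_succ_le hi'.2)

lemma antitoneOn_r (h : jmsFeasible q T a d r lam) {j : ℕ} (hj : 1 ≤ j) :
    AntitoneOn (r j) (Set.Icc j q) := by
  obtain ⟨-, -, -, -, -, -, hr, -⟩ := h
  exact antitoneOn_of_add_one_le Set.ordConnected_Icc fun i _ hi hi' =>
    hr j i hj hi.1 (Nat.lt_of_succ_le hi'.2)

lemma blockLiftR_add_one_le (hc : 0 < c) (h : jmsFeasible q T a d r lam) {j i : ℕ}
    (hj : 1 ≤ j) (hji : j ≤ i) (hi : i < c * q) :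
    blockLiftR c a r j (i + 1) ≤ blockLiftR c a r j i := by
  have hJ : 1 ≤ j ⌈/⌉ c := (Nat.one_le_ceilDiv_iff hc).2 hj
  have hr := h.antitoneOn_r hJ
  obtain ⟨-, -, -, -, -, -, hr_succ, -, hr_diag, -⟩ := h
  have hJI : j ⌈/⌉ c ≤ i ⌈/⌉ c := Nat.ceilDiv_le_ceilDiv hc hji
  have hII' : i ⌈/⌉ c ≤ (i + 1) ⌈/⌉ c := Nat.ceilDiv_le_ceilDiv hc i.le_succ
  have hI'q : (i + 1) ⌈/⌉ c ≤ q := (ceilDiv_le_iff_le_mul hc).2 hi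
  unfold blockLiftR blockLift
  rcases hJI.lt_or_eq with hJI | hJI
  · rw [if_pos hJI, if_pos (hJI.trans_le hII')]
    gcongr
    exact hr ⟨hJI.le, hII'.trans hI'q⟩ ⟨hJI.le.trans hII', hI'q⟩ hII'
  · rw [if_neg hJI.not_lt]
    rcases (Nat.add_one_ceilDiv_le hc i).lt_or_eq with hI' | hI'
    · rw [if_neg (by omega)]
    rw [if_pos (by omega), hI', ← hJI]
    gcongr
    exact (hr_succ _ _ hJ le_rfl (by omega)).trans (hr_diag _ hJ (by omega))

lemma blockLift_le_blockLiftR_add (hc : 0 < c) (h : jmsFeasible q T a d r lam) {j i : ℕ}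
    (hj : 1 ≤ j) (hji : j < i) (hiq : i ≤ c * q) :
    blockLift c a i ≤ blockLiftR c a r j i + blockLift c d i + blockLift c d j := by
  obtain ⟨-, hd, -, -, -, -, -, htri, -⟩ := h
  have hc' : (0 : ℝ) ≤ c := c.cast_nonneg
  unfold blockLiftR blockLift
  rcases (Nat.ceilDiv_le_ceilDiv hc hji.le).lt_or_eq with hJI | hJI
  · rw [if_pos hJI, ← add_div, ← add_div]
    gcongr
    exact htri _ _ ((Nat.one_le_ceilDiv_iff hc).2 hj) hJI ((ceilDiv_le_iff_le_mul hc).2 hiq)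
  · rw [if_neg hJI.not_lt, hJI, add_assoc, le_add_iff_nonneg_right]
    exact add_nonneg (div_nonneg (hd _) hc') (div_nonneg (hd _) hc')

lemma sum_jmsLoad_blockLift_le (hc : 0 < c) (h : jmsFeasible q T a d r lam) {i : ℕ}
    (hi : 1 ≤ i) (hiq : i ≤ c * q) :
    ∑ j ∈ Icc 1 (c * q), jmsLoad (blockLift c a) (blockLift c d) (blockLiftR c a r) i j ≤ lam := by
  obtain ⟨-, -, -, -, -, -, -, -, -, hlam, -⟩ := h
  have hI : 1 ≤ i ⌈/⌉ c := (Nat.one_le_ceilDiv_iff hc).2 hi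
  have hIq : i ⌈/⌉ c ≤ q := (ceilDiv_le_iff_le_mul hc).2 hiq
  simp only [jmsLoad_blockLift hc]
  rw [sum_Icc_mul_ceilDiv hc (jmsLoad a d r (i ⌈/⌉ c) · / c), nsmul_eq_mul, ← sum_div,
    mul_div_cancel₀ _ (by positivity), jmsLoad_sum hI hIq]
  exact hlam _ hI hIq

theorem lift (hc : 0 < c) (h : jmsFeasible q T a d r lam) :
    jmsFeasible (c * q) T (blockLift c a) (blockLift c d) (blockLiftR c a r) lam := by
  have ⟨ha, hd, hr, hlam, hsum, _, _, _, _, _, hT⟩ := h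
  have hc' : (0 : ℝ) ≤ c := c.cast_nonneg
  refine ⟨fun i => div_nonneg (ha _) hc', fun i => div_nonneg (hd _) hc', fun j i => ?_, hlam,
    (sum_blockLift hc d q).trans hsum, fun i hi hiq => ?_,
    fun j i hj hji hiq => h.blockLiftR_add_one_le hc hj hji hiq,
    fun j i hj hji hiq => h.blockLift_le_blockLiftR_add hc hj hji hiq,
    fun j _ _ => (if_neg (lt_irrefl _)).le,
    fun i hi hiq => (jmsLoad_sum hi hiq).symm.trans_le (h.sum_jmsLoad_blockLift_le hc hi hiq),
    hT⟩
  · unfold blockLiftR blockLift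
    split_ifs
    exacts [div_nonneg (hr _ _) hc', div_nonneg (ha _) hc']
  · exact div_le_div_of_nonneg_right (h.monotoneOn_a (Nat.ceilDiv_mem_Icc hc hi hiq.le)
      (Nat.ceilDiv_mem_Icc hc (by omega) hiq) (Nat.ceilDiv_le_ceilDiv hc i.le_succ)) hc'

end jmsFeasible

theorem stmt_9_general (q c : ℕ) (hc : 1 ≤ c) (T : ℝ)
    (a d : ℕ → ℝ) (r : ℕ → ℕ → ℝ) (lam : ℝ)
    (hfeas : jmsFeasible q T a d r lam) :
    jmsFeasible (c * q) T
      (fun i => a ((i + c - 1) / c) / c)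
      (fun i => d ((i + c - 1) / c) / c)
      (fun j i =>
        if (j + c - 1) / c < (i + c - 1) / c then
          r ((j + c - 1) / c) ((i + c - 1) / c) / c
        else
          a ((j + c - 1) / c) / c)
      lam ∧
    (∑ i ∈ Finset.Icc 1 (c * q), a ((i + c - 1) / c) / c) - lam
      = (∑ i ∈ Finset.Icc 1 q, a i) - lam :=
  ⟨hfeas.lift hc, congrArg (· - lam) (sum_blockLift hc a q)⟩

/-- Any feasible solution of `LP_JMS(q,T)` lifts to a feasible solution of
`LP_JMS(cq,T)` with the same objective value, via
`α'_i = α_{⌈i/c⌉}/c`, `d'_i = d_{⌈i/c⌉}/c`,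
`r'_{j,i} = r_{⌈j/c⌉,⌈i/c⌉}/c` if `⌈j/c⌉ < ⌈i/c⌉` and `α_{⌈j/c⌉}/c` otherwise,
`λ' = λ`.  (Here `⌈i/c⌉ = (i + c - 1) / c` in natural-number arithmetic.)
In particular `opt_JMS(q,T) ≤ opt_JMS(cq,T)`. -/
theorem stmt_9 (q c : ℕ) (hq : 1 ≤ q) (hc : 1 ≤ c) (T : ℝ) (hT : 0 < T)
    (a d : ℕ → ℝ) (r : ℕ → ℕ → ℝ) (lam : ℝ)
    (hfeas : jmsFeasible q T a d r lam) :
    jmsFeasible (c * q) T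
      (fun i => a ((i + c - 1) / c) / c)
      (fun i => d ((i + c - 1) / c) / c)
      (fun j i =>
        if (j + c - 1) / c < (i + c - 1) / c then
          r ((j + c - 1) / c) ((i + c - 1) / c) / c
        else
          a ((j + c - 1) / c) / c)
      lam ∧
    (∑ i ∈ Finset.Icc 1 (c * q), a ((i + c - 1) / c) / c) - lam
      = (∑ i ∈ Finset.Icc 1 q, a i) - lam :=
  stmt_9_general q c hc T a d r lam hfeas
end

section
/- Let ρ_BR > 1 and η₂ > 0 be real constants. Define h(a) = min(2(1+2a)/(1+2a²), ρ_BR·(2 − (1−a)·η₂)) for a ∈ [0,1]. Then sup_{a ∈ [0,1]} h(a) < 2·ρ_BR. In particular, the maximum of the minimum of the two expressions is strictly less than 2ρ_BR. -/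
theorem stmt_13 (ρ η₂ : ℝ) (hρ : 1 < ρ) (hη : 0 < η₂) (hη2 : η₂ ≤ 2) :
    (⨆ a : Set.Icc (0 : ℝ) 1,
        min (2 * (1 + 2 * (a : ℝ)) / (1 + 2 * (a : ℝ) ^ 2))
          (ρ * (2 - (1 - (a : ℝ)) * η₂)))
      < 2 * ρ := by
  have hne : Nonempty (Set.Icc (0 : ℝ) 1) := ⟨⟨0, by norm_num⟩⟩
  obtain ⟨B, hB⟩ : ∃ B : ℝ, B = 2 + (8 * ρ - 8) / (4 + η₂) := ⟨_, rfl⟩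
  have hden : (0:ℝ) < 4 + η₂ := by linarith
  have hkey : (8 * ρ - 8) / (4 + η₂) * (4 + η₂) = 8 * ρ - 8 :=
    div_mul_cancel₀ _ (ne_of_gt hden)
  have hBlt : B < 2 * ρ := by
    rw [hB]
    rw [show (2:ℝ) + (8 * ρ - 8) / (4 + η₂) < 2 * ρ ↔
        (8 * ρ - 8) / (4 + η₂) < 2 * ρ - 2 by constructor <;> intro <;> linarith]
    rw [div_lt_iff₀ hden]
    nlinarith
  refine lt_of_le_of_lt (ciSup_le ?_) hBlt
  rintro ⟨a, ha0, ha1⟩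
  simp only
  have hpos : (0:ℝ) < 1 + 2 * a ^ 2 := by nlinarith
  by_cases hcase : 2 + 4 * (1 - a) ≤ B
  · refine le_trans (min_le_left _ _) (le_trans ?_ hcase)
    rw [div_le_iff₀ hpos]
    nlinarith [sq_nonneg (1 - a), sq_nonneg a, mul_nonneg ha0 (sq_nonneg (1 - a))]
  · push_neg at hcase
    refine le_trans (min_le_right _ _) ?_
    -- from hcase : B < 2 + 4*(1-a), so (1-a) > (8ρ-8)/(4(4+η₂))... use nlinarith
    have h1 : ρ * (2 - (1 - a) * η₂) ≤ 2 * ρ - (1 - a) * η₂ := by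
      have : (1 - a) * η₂ ≤ ρ * ((1 - a) * η₂) := by
        nlinarith [mul_nonneg (by linarith : (0:ℝ) ≤ 1 - a) hη.le]
      nlinarith
    refine le_trans h1 ?_
    -- B = 2 + s* where 4*(1-a) > s* := (8ρ-8)/(4+η₂); need 2ρ - (1-a)η₂ ≤ B
    rw [hB]
    have hs : (8 * ρ - 8) / (4 + η₂) < 4 * (1 - a) := by linarith
    nlinarith [mul_lt_mul_of_pos_right hs hden, hkey,
      mul_nonneg (by linarith : (0:ℝ) ≤ 1 - a) hη.le]
end

section
/- In a finite metric space, consider a UFL instance with clients C and facilities F, where M = ∑_{c∈C, f∈F} d(c,f), γ = min(min_f o(f), min over distinct opening cost values of their difference), and the facility opening costs (o(f))_{f∈F} are scaled by λ = 3M/γ. Then for any solution S' consisting of a single cheapest facility and any solution S'' with strictly larger (scaled) facility cost, the scaled opening cost of S'' exceeds that of S' by at least 3M, which is at least 3 times the connection cost of any solution; consequently, any solution that is LMP 2-approximate w.r.t. S' (scaled costs) opens exactly one cheapest facility. -/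
/-- Cost-scaling argument: in a UFL instance with clients `C`, facilities `F`,
client–facility distances `d` (positive, coming from a metric on `C ∪ F`),
positive opening costs `o`, with `γ > 0` a lower bound on all opening costs and
on all differences of distinct opening costs, `M = ∑_{c,f} d c f`, and with
opening costs scaled by `λ = 3M/γ`:
(1) any solution `S''` whose scaled opening cost strictly exceeds that of a
single cheapest facility `f₀` exceeds it by at least `3M`;
(2) the connection cost of any nonempty solution is at most `M`;
(3) consequently any nonempty solution that is LMP 2-approximate w.r.t. `{f₀}`
(in scaled costs) opens exactly one cheapest facility. -/
theorem stmt_14 {C F : Type*} [Fintype C] [Fintype F] [DecidableEq F]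
    [Nonempty C] [Nonempty F]
    (d : C → F → ℝ) (hd : ∀ c f, 0 < d c f)
    (o : F → ℝ) (ho : ∀ f, 0 < o f)
    (γ : ℝ) (hγpos : 0 < γ)
    (hγ1 : ∀ f, γ ≤ o f)
    (hγ2 : ∀ f f', o f ≠ o f' → γ ≤ |o f - o f'|)
    (f₀ : F) (hf₀ : ∀ f, o f₀ ≤ o f)
    (M lam : ℝ) (hM : M = ∑ c : C, ∑ f : F, d c f)
    (hlam : lam = 3 * M / γ) :
    (∀ S'' : Finset F, lam * o f₀ < lam * (∑ f ∈ S'', o f) →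
      lam * o f₀ + 3 * M ≤ lam * (∑ f ∈ S'', o f)) ∧
    (∀ (S : Finset F) (hS : S.Nonempty),
      (∑ c : C, S.inf' hS fun f => d c f) ≤ M) ∧
    (∀ (S : Finset F) (hS : S.Nonempty),
      lam * (∑ f ∈ S, o f) + (∑ c : C, S.inf' hS fun f => d c f) ≤
          lam * o f₀ + 2 * (∑ c : C, d c f₀) →
      ∃ f, S = {f} ∧ ∀ f', o f ≤ o f') := by
  have hMpos : 0 < M := by
    rw [hM]
    exact Finset.sum_pos
      (fun c _ => Finset.sum_pos (fun f _ => hd c f) Finset.univ_nonempty)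
      Finset.univ_nonempty
  have hlampos : 0 < lam := by rw [hlam]; positivity
  have hlamγ : lam * γ = 3 * M := by rw [hlam]; field_simp
  -- key: strict excess of unscaled opening cost is at least γ
  have key : ∀ S : Finset F, o f₀ < ∑ f ∈ S, o f → o f₀ + γ ≤ ∑ f ∈ S, o f := by
    intro S hlt
    have hne : S.Nonempty := by
      rcases S.eq_empty_or_nonempty with rfl | h
      · simp at hlt; linarith [ho f₀]
      · exact h
    obtain ⟨f, hf⟩ := hne
    rcases eq_or_ne S {f} with rfl | hS1
    · rw [Finset.sum_singleton] at hlt ⊢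
      have hne' : o f ≠ o f₀ := fun h => absurd h.symm (ne_of_lt hlt)
      have := hγ2 f f₀ hne'
      rw [abs_of_nonneg (by linarith [hf₀ f])] at this
      linarith
    · obtain ⟨g, hg, hgf⟩ : ∃ g ∈ S, g ≠ f := by
        by_contra h
        push_neg at h
        exact hS1 (Finset.eq_singleton_iff_unique_mem.mpr ⟨hf, h⟩)
      have hsub : ({f, g} : Finset F) ⊆ S :=
        Finset.insert_subset hf (Finset.singleton_subset_iff.mpr hg)
      have hle : ∑ x ∈ ({f, g} : Finset F), o x ≤ ∑ x ∈ S, o x :=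
        Finset.sum_le_sum_of_subset_of_nonneg hsub (fun x _ _ => (ho x).le)
      rw [Finset.sum_pair hgf.symm] at hle
      have h1 := hf₀ f
      have h2 := hγ1 g
      linarith
  have part1 : ∀ S'' : Finset F, lam * o f₀ < lam * (∑ f ∈ S'', o f) →
      lam * o f₀ + 3 * M ≤ lam * (∑ f ∈ S'', o f) := by
    intro S hlt
    have h := key S ((mul_lt_mul_iff_right₀ hlampos).mp hlt)
    nlinarith [h, hlampos]
  have part2 : ∀ (S : Finset F) (hS : S.Nonempty),
      (∑ c : C, S.inf' hS fun f => d c f) ≤ M := by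
    intro S hS
    obtain ⟨f, hf⟩ := hS
    calc (∑ c : C, S.inf' ⟨f, hf⟩ fun f => d c f)
        ≤ ∑ c : C, d c f := Finset.sum_le_sum fun c _ => Finset.inf'_le _ hf
      _ ≤ ∑ c : C, ∑ g : F, d c g := Finset.sum_le_sum fun c _ =>
          Finset.single_le_sum (fun g _ => (hd c g).le) (Finset.mem_univ f)
      _ = M := hM.symm
  refine ⟨part1, part2, ?_⟩
  intro S hS hcost
  have hdSpos : 0 < ∑ c : C, S.inf' hS fun f => d c f :=
    Finset.sum_pos (fun c _ => (Finset.lt_inf'_iff hS).mpr fun f _ => hd c f)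
      Finset.univ_nonempty
  have hdf₀ : (∑ c : C, d c f₀) ≤ M := by
    have := part2 {f₀} (Finset.singleton_nonempty f₀)
    simpa using this
  have hsum_le : ∑ f ∈ S, o f ≤ o f₀ := by
    by_contra h
    push_neg at h
    have h1 := part1 S ((mul_lt_mul_iff_right₀ hlampos).mpr h)
    linarith
  obtain ⟨f, hf⟩ := hS
  have hSf : S = {f} := by
    rcases eq_or_ne S {f} with rfl | hS1
    · rfl
    · exfalso
      obtain ⟨g, hg, hgf⟩ : ∃ g ∈ S, g ≠ f := by
        by_contra h
        push_neg at h
        exact hS1 (Finset.eq_singleton_iff_unique_mem.mpr ⟨hf, h⟩)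
      have hsub : ({f, g} : Finset F) ⊆ S :=
        Finset.insert_subset hf (Finset.singleton_subset_iff.mpr hg)
      have hle : ∑ x ∈ ({f, g} : Finset F), o x ≤ ∑ x ∈ S, o x :=
        Finset.sum_le_sum_of_subset_of_nonneg hsub (fun x _ _ => (ho x).le)
      rw [Finset.sum_pair hgf.symm] at hle
      have := hf₀ f
      have := ho g
      linarith
  subst hSf
  rw [Finset.sum_singleton] at hsum_le
  refine ⟨f, rfl, fun f' => ?_⟩
  calc o f ≤ o f₀ := hsum_le
    _ ≤ o f' := hf₀ f'
end

section
/- Suppose λ* ≥ 0, and solutions S₁, S₂ with facility costs o(S₁) ≤ o(OPT) ≤ o(S₂) and connection costs d₁, d₂ satisfy λ*·o(S_i) + d_i ≤ λ*·o(OPT) + 2·opt for i = 1,2. Let a ∈ [0,1] satisfy a·o(S₁) + (1−a)·o(S₂) = o(OPT). Then a·d₁ + (1−a)·d₂ ≤ 2·opt. Moreover, if a ≥ 1/2 then d₁ ≤ 4·opt. -/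
theorem stmt_15 (lam opt o₁ o₂ oO d₁ d₂ a : ℝ)
    (hlam : 0 ≤ lam) (hopt : 0 ≤ opt) (hd₁ : 0 ≤ d₁) (hd₂ : 0 ≤ d₂)
    (h₁ : o₁ ≤ oO) (h₂ : oO ≤ o₂) (ha0 : 0 ≤ a) (ha1 : a ≤ 1)
    (hcomb : a * o₁ + (1 - a) * o₂ = oO)
    (hl1 : lam * o₁ + d₁ ≤ lam * oO + 2 * opt)
    (hl2 : lam * o₂ + d₂ ≤ lam * oO + 2 * opt) :
    a * d₁ + (1 - a) * d₂ ≤ 2 * opt ∧ (1 / 2 ≤ a → d₁ ≤ 4 * opt) := by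
  have key : a * d₁ + (1 - a) * d₂ ≤ 2 * opt := by
    nlinarith [mul_le_mul_of_nonneg_left hl1 ha0,
      mul_le_mul_of_nonneg_left hl2 (by linarith : (0:ℝ) ≤ 1 - a)]
  refine ⟨key, fun ha => ?_⟩
  nlinarith [mul_nonneg (by linarith : (0:ℝ) ≤ 1 - a) hd₂]
end

section
/- For any constants Δ ∈ ℕ and α, β > 0, there exists a facility location instance (C, F, dist, o) and feasible solutions OPT, S ⊆ F such that S is a local optimum for the objective α·o(S) + β·d(S) under swaps changing at most Δ facilities, yet o(OPT) + t·d(OPT) < o(S) + d(S) for every real t. Concretely: take n large, F = {f₀,...,f_n}, C = {c₁,...,c_n}, dist(f_i,c_i) = 0, dist(f₀,c_i) = 1, o(f₀) = x, o(f_i) = y for i ≥ 1, where y > β/α, α(x − ry) < β(n − 2r) for all r ∈ {1,...,Δ}, and ny < x + n; then S = {f₀} is a local optimum but OPT = {f₁,...,f_n} has d(OPT) = 0 and o(OPT) = ny < x + n = o(S) + d(S). -/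
/-- Connection cost of a nonempty set `S` of open facilities:
each client is served by the nearest open facility. -/
noncomputable def connCost {F C : Type*} [Fintype C]
    (dist : F → C → ℝ) (S : Finset F) (hS : S.Nonempty) : ℝ :=
  ∑ c : C, S.inf' hS fun f => dist f c

/-- For any constants `Δ ∈ ℕ` and `α, β > 0` there is a facility-location
instance (clients `Fin n`, facilities `Fin (n+1)`, facility `0` at distance 1
from every client, facility `i+1` co-located with client `i`, distance 2
otherwise; opening costs `x` for facility `0` and `y` for the others, with
`y > β/α`, `α(x − ry) < β(n − 2r)` for `1 ≤ r ≤ Δ` and `ny < x + n`) on which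
`S = {0}` is a local optimum for the objective `α·o(S) + β·d(S)` under swaps
closing/opening at most `Δ` facilities, while `OPT` (all other facilities) is
strictly better than `S` for the objective `o(·) + t·d(·)` for every real `t`. -/
theorem stmt_17 (Δ : ℕ) (α β : ℝ) (hα : 0 < α) (hβ : 0 < β) :
    ∃ (n : ℕ), 0 < n ∧
      ∃ (dist : Fin (n + 1) → Fin n → ℝ) (o : Fin (n + 1) → ℝ) (x y : ℝ),
        (∀ f c, 0 ≤ dist f c) ∧
        (∀ c : Fin n, dist 0 c = 1) ∧
        (∀ c : Fin n, dist c.succ c = 0) ∧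
        (∀ i c : Fin n, i ≠ c → dist i.succ c = 2) ∧
        o 0 = x ∧ (∀ i : Fin n, o i.succ = y) ∧
        0 < x ∧ β / α < y ∧
        (∀ r : ℕ, 1 ≤ r → r ≤ Δ →
          α * (x - (r : ℝ) * y) < β * ((n : ℝ) - 2 * (r : ℝ))) ∧
        (n : ℝ) * y < x + (n : ℝ) ∧
        (∀ (S' : Finset (Fin (n + 1))) (hS' : S'.Nonempty),
          ((({0} : Finset (Fin (n + 1))) \ S').card ≤ Δ) →
          ((S' \ ({0} : Finset (Fin (n + 1)))).card ≤ Δ) →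
          α * (∑ f ∈ ({0} : Finset (Fin (n + 1))), o f) +
              β * connCost dist {0} (Finset.singleton_nonempty 0) ≤
            α * (∑ f ∈ S', o f) + β * connCost dist S' hS') ∧
        (∀ (t : ℝ) (hOPT : (Finset.univ \ {0} : Finset (Fin (n + 1))).Nonempty),
          (∑ f ∈ (Finset.univ \ {0} : Finset (Fin (n + 1))), o f) +
              t * connCost dist (Finset.univ \ {0}) hOPT <
            (∑ f ∈ ({0} : Finset (Fin (n + 1))), o f) +
              connCost dist {0} (Finset.singleton_nonempty 0)) := by
  classical
  have ha : 0 < β / α := div_pos hβ hα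
  set a : ℝ := β / α with ha_def
  obtain ⟨n, hΔn, hn2⟩ : ∃ n : ℕ, Δ < n ∧ 2 * a * Δ < (n : ℝ) := by
    refine ⟨Δ + 1 + Nat.ceil (2 * a * Δ), by omega, ?_⟩
    have h1 := Nat.le_ceil (2 * a * (Δ : ℝ))
    push_cast
    linarith
  have hΔnR : (Δ : ℝ) < n := by exact_mod_cast hΔn
  set x : ℝ := a * ((n : ℝ) - Δ) with hx_def
  set y : ℝ := a + 1 / 2 with hy_def
  have hx : 0 < x := mul_pos ha (by linarith)
  have hy : a < y := by rw [hy_def]; linarith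
  have hβa : a * α = β := div_mul_cancel₀ β hα.ne'
  set dist : Fin (n + 1) → Fin n → ℝ :=
    fun f c => if f = c.succ then 0 else if f = 0 then 1 else 2 with hdist
  set o : Fin (n + 1) → ℝ := fun f => if f = 0 then x else y with ho
  have hdnn : ∀ f c, 0 ≤ dist f c := by
    intro f c
    simp only [hdist]
    split <;> [norm_num; split <;> norm_num]
  have hd0 : ∀ c : Fin n, dist 0 c = 1 := by
    intro c
    simp [hdist, (Fin.succ_ne_zero c).symm]
  have hswap : ∀ r : ℕ, 1 ≤ r → r ≤ Δ →
      α * (x - (r : ℝ) * y) < β * ((n : ℝ) - 2 * (r : ℝ)) := by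
    intro r h1 h2
    have h1R : (1 : ℝ) ≤ r := by exact_mod_cast h1
    have h2R : (r : ℝ) ≤ Δ := by exact_mod_cast h2
    rw [← hβa, hx_def, hy_def]
    nlinarith [mul_nonneg (mul_nonneg hα.le ha.le) (sub_nonneg.2 h2R),
      mul_pos hα (lt_of_lt_of_le one_pos h1R)]
  have hny : (n : ℝ) * y < x + n := by
    rw [hx_def, hy_def]
    nlinarith [hn2]
  have hconn0 : connCost dist {0} (Finset.singleton_nonempty (0 : Fin (n + 1))) = n := by
    unfold connCost
    simp [hd0]
  have hsum0 : ∑ f ∈ ({0} : Finset (Fin (n + 1))), o f = x := by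
    simp [ho]
  -- local optimality core
  have hloc : ∀ (S' : Finset (Fin (n + 1))) (hS' : S'.Nonempty),
      (S' \ ({0} : Finset (Fin (n + 1)))).card ≤ Δ →
      α * x + β * n ≤ α * (∑ f ∈ S', o f) + β * connCost dist S' hS' := by
    intro S' hS' hk
    set T := S' \ ({0} : Finset (Fin (n + 1))) with hT
    set k := T.card with hkdef
    have hTne : ∀ f ∈ T, f ≠ 0 := by
      intro f hf
      have := (Finset.mem_sdiff.1 hf).2
      simpa using this
    have hkn : k ≤ n := le_trans hk hΔn.le
    have hkNR : (k : ℝ) ≤ Δ := by exact_mod_cast hk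
    have hTsum : ∑ f ∈ T, o f = (k : ℝ) * y := by
      rw [Finset.sum_congr rfl (fun f hf => show o f = y by simp [ho, hTne f hf]),
        Finset.sum_const, nsmul_eq_mul]
    have hsum : ∑ f ∈ S', o f = (if (0 : Fin (n + 1)) ∈ S' then x else 0) + (k : ℝ) * y := by
      have hsplit : ∑ f ∈ S' ∩ {0}, o f + ∑ f ∈ T, o f = ∑ f ∈ S', o f :=
        Finset.sum_inter_add_sum_sdiff S' {0} o
      by_cases h0 : (0 : Fin (n + 1)) ∈ S'
      · rw [if_pos h0]
        rw [Finset.inter_singleton_of_mem h0] at hsplit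
        rw [← hsplit, hTsum]
        simp [ho]
      · rw [if_neg h0]
        rw [Finset.inter_singleton_of_notMem h0] at hsplit
        rw [← hsplit, hTsum]
        simp
    have himg : T = Finset.image Fin.succ
        (Finset.univ.filter fun c : Fin n => c.succ ∈ S') := by
      ext f
      simp only [Finset.mem_image, Finset.mem_filter, Finset.mem_univ, true_and, hT,
        Finset.mem_sdiff, Finset.mem_singleton]
      constructor
      · rintro ⟨hfS, hf0⟩
        obtain ⟨c, rfl⟩ := Fin.eq_succ_of_ne_zero hf0
        exact ⟨c, hfS, rfl⟩
      · rintro ⟨c, hc, rfl⟩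
        exact ⟨hc, Fin.succ_ne_zero c⟩
    have hkc : (Finset.univ.filter fun c : Fin n => c.succ ∈ S').card = k := by
      rw [hkdef, himg, Finset.card_image_of_injective _ (Fin.succ_injective n)]
    have hconnge : ∀ m : ℝ, 0 ≤ m →
        (∀ f ∈ S', ∀ c : Fin n, f ≠ c.succ → m ≤ dist f c) →
        m * ((n : ℝ) - k) ≤ connCost dist S' hS' := by
      intro m hm0 hmle
      have hle : ∀ c : Fin n,
          (if c.succ ∈ S' then (0 : ℝ) else m) ≤ S'.inf' hS' fun f => dist f c := by
        intro c
        apply Finset.le_inf'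
        intro f hf
        by_cases hfc : f = c.succ
        · subst hfc
          rw [if_pos hf]
          exact hdnn _ _
        · by_cases hcs : c.succ ∈ S'
          · rw [if_pos hcs]; exact hdnn _ _
          · rw [if_neg hcs]; exact hmle f hf c hfc
      have hsum1 : ∑ c : Fin n, (if c.succ ∈ S' then (0 : ℝ) else m)
          = ((Finset.univ.filter fun c : Fin n => ¬ c.succ ∈ S').card : ℝ) * m := by
        rw [Finset.sum_ite, Finset.sum_const, Finset.sum_const]
        simp [nsmul_eq_mul]
      have hcard : (Finset.univ.filter fun c : Fin n => ¬ c.succ ∈ S').card = n - k := by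
        have h := Finset.card_filter_add_card_filter_not
          (s := (Finset.univ : Finset (Fin n))) (p := fun c : Fin n => c.succ ∈ S')
        rw [Finset.card_univ, Fintype.card_fin] at h
        omega
      have hfin : m * ((n : ℝ) - k) ≤ ∑ c : Fin n, (if c.succ ∈ S' then (0 : ℝ) else m) := by
        rw [hsum1, hcard, Nat.cast_sub hkn, mul_comm]
      refine le_trans hfin ?_
      unfold connCost
      exact Finset.sum_le_sum fun c _ => hle c
    by_cases h0 : (0 : Fin (n + 1)) ∈ S'
    · have hc1 : 1 * ((n : ℝ) - k) ≤ connCost dist S' hS' := by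
        refine hconnge 1 one_pos.le ?_
        intro f hf c hfc
        simp only [hdist]
        rw [if_neg hfc]
        split <;> norm_num
      rw [hsum, if_pos h0]
      have hβy : β ≤ α * y := by rw [← hβa]; nlinarith
      nlinarith [mul_nonneg (sub_nonneg.2 hβy) (Nat.cast_nonneg (α := ℝ) k),
        mul_le_mul_of_nonneg_left hc1 hβ.le]
    · have hTS : T = S' := by
        rw [hT]
        ext f
        simp only [Finset.mem_sdiff, Finset.mem_singleton, and_iff_left_iff_imp]
        intro hf hf0
        exact h0 (hf0 ▸ hf)
      have hk1 : 1 ≤ k := by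
        rw [hkdef, hTS]
        exact Finset.card_pos.2 hS'
      have hc2 : 2 * ((n : ℝ) - k) ≤ connCost dist S' hS' := by
        refine hconnge 2 (by norm_num) ?_
        intro f hf c hfc
        have hf0 : f ≠ 0 := fun h => h0 (h ▸ hf)
        simp only [hdist]
        rw [if_neg hfc, if_neg hf0]
      have hs := hswap k hk1 hk
      rw [hsum, if_neg h0]
      nlinarith [mul_le_mul_of_nonneg_left hc2 hβ.le]
  -- OPT facts
  have hconnOPT : ∀ h, connCost dist (Finset.univ \ {0} : Finset (Fin (n + 1))) h = 0 := by
    intro h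
    unfold connCost
    apply Finset.sum_eq_zero
    intro c _
    have hmem : c.succ ∈ (Finset.univ \ {0} : Finset (Fin (n + 1))) := by
      simp [Fin.succ_ne_zero c]
    have hle : (Finset.univ \ {0} : Finset (Fin (n + 1))).inf' h (fun f => dist f c)
        ≤ dist c.succ c := Finset.inf'_le _ hmem
    have hge : (0 : ℝ) ≤ (Finset.univ \ {0} : Finset (Fin (n + 1))).inf' h (fun f => dist f c) :=
      Finset.le_inf' _ _ fun f _ => hdnn f c
    have : dist c.succ c = 0 := by simp [hdist]
    linarith [hle.trans_eq this]
  have hsumOPT : ∑ f ∈ (Finset.univ \ {0} : Finset (Fin (n + 1))), o f = (n : ℝ) * y := by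
    have hcard : (Finset.univ \ {0} : Finset (Fin (n + 1))).card = n := by
      rw [Finset.card_univ_diff]
      simp
    rw [Finset.sum_congr rfl (fun f hf => show o f = y by
        have : f ≠ 0 := by
          have := (Finset.mem_sdiff.1 hf).2
          simpa using this
        simp [ho, this]),
      Finset.sum_const, hcard, nsmul_eq_mul]
  refine ⟨n, by omega, dist, o, x, y, hdnn, hd0, ?_, ?_, ?_, ?_, hx, hy, hswap, hny, ?_, ?_⟩
  · intro c
    simp [hdist]
  · intro i c hic
    simp only [hdist]
    rw [if_neg (fun h => hic (Fin.succ_injective n h)), if_neg (Fin.succ_ne_zero i)]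
  · simp [ho]
  · intro i
    simp [ho, Fin.succ_ne_zero i]
  · intro S' hS' _ h2
    rw [hsum0, hconn0]
    exact hloc S' hS' h2
  · intro t hOPT
    rw [hsumOPT, hconnOPT, hsum0, hconn0]
    simpa using hny
end
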